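/- arXiv:math/0409080 — 2 statements merged into one kernel-verified Lean document; each statement's English description precedes it below -/
import Mathlib

section
/- Let M and N be matroids with finite disjoint ground sets S and T. Then the collection I = { A ⊆ S ∪ T : A ∩ S is independent in M, and rk(M) − rk_M(A ∩ S) ≥ |A ∩ T| − rk_N(A ∩ T) } is the family of independent sets of a matroid on S ∪ T; i.e., there exists a matroid on ground set S ∪ T whose independent sets are exactly the members of I. -/
/-!
Write `A_S = A ∩ S` and `A_T = A ∩ T`. Since `A_S` is independent, the defining inequality says
`|A| ≤ rk(M) + rk_N(A_T)`; in this form the subset axiom is the monotonicity of nullity. For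
augmentation from `I` to a larger `J`: if `rk_N(J_T) > rk_N(I_T)`, some `e ∈ J_T` raises
`rk_N(I_T)` by one and can be added; otherwise `|I| < |J| ≤ rk(M) + rk_N(I_T)` leaves a unit of
slack, so any `e ∈ J \ I` keeping the `S`-part independent can be added, and such an `e` exists
by augmentation in `M` or by counting in `T`.
-/

open Set Matroid

/-- The rank of a set `X` in a matroid `M`: the maximum cardinality of an
independent subset of `X`.  For `X = M.E` this is the rank of `M`. -/
noncomputable def mrk {α : Type*} (M : Matroid α) (X : Set α) : ℕ :=
  sSup (Set.ncard '' {I | M.Indep I ∧ I ⊆ X})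

namespace Matroid

variable {α : Type*} {M N : Matroid α} {I J X Y : Set α} {e : α}

section Rank

variable [M.RankFinite]

lemma IsBasis'.mrk_eq (hI : M.IsBasis' I X) : mrk M X = I.ncard := by
  refine IsGreatest.csSup_eq ⟨⟨I, ⟨hI.indep, hI.subset⟩, rfl⟩, ?_⟩
  rintro _ ⟨J, ⟨hJ, hJX⟩, rfl⟩
  rw [ncard_def, ncard_def]
  refine ENat.toNat_le_toNat ?_ hI.indep.finite.encard_lt_top.ne
  exact (hJ.encard_le_eRk_of_subset hJX).trans hI.eRk_eq_encard.le

lemma cast_mrk (X : Set α) : (mrk M X : ℕ∞) = M.eRk X := by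
  obtain ⟨I, hI⟩ := M.exists_isBasis' X
  rw [hI.mrk_eq, hI.indep.finite.cast_ncard_eq, hI.eRk_eq_encard]

lemma mrk_mono (hXY : X ⊆ Y) : mrk M X ≤ mrk M Y := by
  exact_mod_cast (cast_mrk (M := M) X).trans_le ((M.eRk_mono hXY).trans (cast_mrk Y).ge)

lemma Indep.mrk_eq_ncard (hI : M.Indep I) : mrk M I = I.ncard :=
  hI.isBasis_self.isBasis'.mrk_eq

lemma Indep.ncard_le_mrk (hI : M.Indep I) (hIX : I ⊆ X) : I.ncard ≤ mrk M X :=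
  hI.mrk_eq_ncard ▸ mrk_mono hIX

lemma mrk_le_ncard (hX : X.Finite) : mrk M X ≤ X.ncard := by
  exact_mod_cast (cast_mrk (M := M) X).trans_le ((M.eRk_le_encard X).trans hX.cast_ncard_eq.ge)

lemma mrk_le_mrk_add_ncard_sdiff (hX : X.Finite) (hYX : Y ⊆ X) :
    mrk M X ≤ mrk M Y + (X \ Y).ncard := by
  have h : M.eRk X ≤ M.eRk Y + (X \ Y).encard :=
    (M.eRk_le_eRk_add_eRk_sdiff hYX).trans (by gcongr; exact M.eRk_le_encard _)
  rw [← cast_mrk, ← cast_mrk, ← hX.sdiff.cast_ncard_eq] at h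
  exact_mod_cast h

lemma exists_mrk_insert_eq_add_one_of_lt (h : mrk M X < mrk M Y) :
    ∃ y ∈ Y \ X, mrk M (insert y X) = mrk M X + 1 := by
  rw [← Nat.cast_lt (α := ℕ∞), cast_mrk, cast_mrk] at h
  obtain ⟨y, hy, hrk⟩ := exists_eRk_insert_eq_add_one_of_lt h
  refine ⟨y, hy, ?_⟩
  rw [← Nat.cast_inj (R := ℕ∞), Nat.cast_add, Nat.cast_one, cast_mrk, cast_mrk, hrk]

end Rank

lemma exists_mem_sdiff_indep_insert_inter_ground (hI : M.Indep (I ∩ M.E))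
    (hJ : M.Indep (J ∩ M.E)) (hIfin : I.Finite) (hJfin : J.Finite) (hIJ : I.ncard < J.ncard) :
    ∃ e ∈ J \ I, M.Indep (insert e I ∩ M.E) := by
  by_cases hE : (I ∩ M.E).ncard < (J ∩ M.E).ncard
  · have hlt : (I ∩ M.E).encard < (J ∩ M.E).encard := by
      rwa [← (hIfin.inter_of_left _).cast_ncard_eq, ← (hJfin.inter_of_left _).cast_ncard_eq,
        Nat.cast_lt]
    obtain ⟨e, ⟨⟨heJ, heE⟩, heI⟩, hins⟩ := hI.exists_insert_of_encard_lt hJ hlt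
    exact ⟨e, ⟨heJ, fun h ↦ heI ⟨h, heE⟩⟩, by rwa [insert_inter_of_mem heE]⟩
  · have hlt : (I \ M.E).ncard < (J \ M.E).ncard := by
      have := ncard_inter_add_ncard_sdiff_eq_ncard I M.E hIfin
      have := ncard_inter_add_ncard_sdiff_eq_ncard J M.E hJfin
      omega
    obtain ⟨e, ⟨heJ, heE⟩, heI⟩ := exists_mem_notMem_of_ncard_lt_ncard hlt hIfin.sdiff
    exact ⟨e, ⟨heJ, fun h ↦ heI ⟨h, heE⟩⟩, by rwa [insert_inter_of_notMem heE]⟩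

def FreeProductIndep (M N : Matroid α) (A : Set α) : Prop :=
  A ⊆ M.E ∪ N.E ∧ M.Indep (A ∩ M.E) ∧ A.ncard ≤ mrk M M.E + mrk N (A ∩ N.E)

lemma freeProductIndep_empty : FreeProductIndep M N ∅ :=
  ⟨empty_subset _, by simp, by simp⟩

section FreeProduct

variable [M.Finite] [N.Finite]

lemma FreeProductIndep.finite (hI : FreeProductIndep M N I) : I.Finite :=
  (M.ground_finite.union N.ground_finite).subset hI.1

lemma FreeProductIndep.subset (hJ : FreeProductIndep M N J) (hIJ : I ⊆ J) :
    FreeProductIndep M N I := by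
  have hJfin := hJ.finite
  obtain ⟨hJE, hJM, hJcard⟩ := hJ
  refine ⟨hIJ.trans hJE, hJM.subset (inter_subset_inter_left _ hIJ), ?_⟩
  have hsplit : I.ncard + (J \ I).ncard = J.ncard := by
    rw [← ncard_union_eq disjoint_sdiff_right (hJfin.subset hIJ) hJfin.sdiff,
      union_sdiff_cancel hIJ]
  have hrk : mrk N (J ∩ N.E) ≤ mrk N (I ∩ N.E) + ((J ∩ N.E) \ (I ∩ N.E)).ncard :=
    mrk_le_mrk_add_ncard_sdiff (hJfin.inter_of_left _) (inter_subset_inter_left _ hIJ)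
  have hsdiff : ((J ∩ N.E) \ (I ∩ N.E)).ncard ≤ (J \ I).ncard :=
    ncard_le_ncard (fun x hx ↦ ⟨hx.1.1, fun hxI ↦ hx.2 ⟨hxI, hx.1.2⟩⟩) hJfin.sdiff
  omega

lemma FreeProductIndep.insert_of_ncard_lt (hI : FreeProductIndep M N I) (heI : e ∉ I)
    (he : e ∈ M.E ∪ N.E) (hM : M.Indep (insert e I ∩ M.E))
    (hcard : I.ncard < mrk M M.E + mrk N (insert e I ∩ N.E)) :
    FreeProductIndep M N (insert e I) :=
  ⟨insert_subset he hI.1, hM, by rw [ncard_insert_of_notMem heI hI.finite]; omega⟩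

lemma FreeProductIndep.exists_insert (hMN : Disjoint M.E N.E) (hI : FreeProductIndep M N I)
    (hJ : FreeProductIndep M N J) (hIJ : I.ncard < J.ncard) :
    ∃ e ∈ J, e ∉ I ∧ FreeProductIndep M N (insert e I) := by
  by_cases hrk : mrk N (I ∩ N.E) < mrk N (J ∩ N.E)
  · obtain ⟨e, ⟨⟨heJ, heN⟩, heIN⟩, hrk_insert⟩ := exists_mrk_insert_eq_add_one_of_lt hrk
    have heI : e ∉ I := fun h ↦ heIN ⟨h, heN⟩
    have heM : e ∉ M.E := hMN.notMem_of_mem_right heN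
    refine ⟨e, heJ, heI, hI.insert_of_ncard_lt heI (Or.inr heN) ?_ ?_⟩
    · rw [insert_inter_of_notMem heM]
      exact hI.2.1
    · rw [insert_inter_of_mem heN, hrk_insert]
      exact Nat.lt_succ_of_le hI.2.2
  · have hslack : I.ncard < mrk M M.E + mrk N (I ∩ N.E) := by
      have := hJ.2.2
      omega
    obtain ⟨e, ⟨heJ, heI⟩, hM⟩ :=
      exists_mem_sdiff_indep_insert_inter_ground hI.2.1 hJ.2.1 hI.finite hJ.finite hIJ
    refine ⟨e, heJ, heI, hI.insert_of_ncard_lt heI (hJ.1 heJ) hM ?_⟩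
    have := mrk_mono (M := N) (inter_subset_inter_left N.E (subset_insert e I))
    omega

def freeProduct (M N : Matroid α) [M.Finite] [N.Finite] (hMN : Disjoint M.E N.E) :
    Matroid α :=
  (IndepMatroid.ofFinite (M.ground_finite.union N.ground_finite) (FreeProductIndep M N)
    freeProductIndep_empty (fun _ _ hJ hIJ ↦ hJ.subset hIJ)
    (fun _ _ hI hJ hIJ ↦ hI.exists_insert hMN hJ hIJ) (fun _ hI ↦ hI.1)).matroid

@[simp]
lemma freeProduct_ground (hMN : Disjoint M.E N.E) : (freeProduct M N hMN).E = M.E ∪ N.E :=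
  rfl

@[simp]
lemma freeProduct_indep_iff (hMN : Disjoint M.E N.E) :
    (freeProduct M N hMN).Indep I ↔ FreeProductIndep M N I :=
  Iff.rfl

lemma freeProductIndep_iff (hMN : Disjoint M.E N.E) {A : Set α} :
    FreeProductIndep M N A ↔ A ⊆ M.E ∪ N.E ∧ M.Indep (A ∩ M.E) ∧
      (A ∩ N.E).ncard - mrk N (A ∩ N.E) ≤ mrk M M.E - mrk M (A ∩ M.E) := by
  refine and_congr_right fun hAE ↦ and_congr_right fun hAM ↦ ?_
  have hA : A.Finite := (M.ground_finite.union N.ground_finite).subset hAE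
  have hsplit : A.ncard = (A ∩ M.E).ncard + (A ∩ N.E).ncard := by
    rw [← ncard_union_eq (hMN.mono inter_subset_right inter_subset_right)
      (hA.inter_of_left _) (hA.inter_of_left _), ← inter_union_distrib_left,
      inter_eq_left.2 hAE]
  have := hAM.mrk_eq_ncard
  have := hAM.ncard_le_mrk inter_subset_right
  have := mrk_le_ncard (M := N) (hA.inter_of_left N.E)
  omega

end FreeProduct

end Matroid

/-- **Proposition 1.** For matroids `M`, `N` with finite disjoint ground sets `S`, `T`,
the collection `{A ⊆ S ∪ T : A ∩ S is independent in M and λ_M(A ∩ S) ≥ ν_N(A ∩ T)}`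
is the family of independent sets of a matroid (the free product `M □ N`) on `S ∪ T`. -/
theorem stmt_0 {α : Type*} (M N : Matroid α) (S T : Set α)
    (hS : S.Finite) (hT : T.Finite) (hMS : M.E = S) (hNT : N.E = T)
    (hST : Disjoint S T) :
    ∃ L : Matroid α, L.E = S ∪ T ∧ ∀ A : Set α,
      L.Indep A ↔ A ⊆ S ∪ T ∧ M.Indep (A ∩ S) ∧
        (A ∩ T).ncard - mrk N (A ∩ T) ≤ mrk M S - mrk M (A ∩ S) := by
  subst hMS hNT
  have : M.Finite := ⟨hS⟩
  have : N.Finite := ⟨hT⟩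
  refine ⟨freeProduct M N hST, freeProduct_ground hST, fun A ↦ ?_⟩
  rw [freeProduct_indep_iff, freeProductIndep_iff hST]
end

section
/- Let M and N be matroids with finite disjoint ground sets S and T, and let L be the free product M □ N. Then the contraction of L by S equals N: L/S = N. -/
open Set Matroid

/-- The contraction `L / C`, defined as the dual of the deletion of `C` from the dual:
`L / C = (L✶ \ C)✶`. -/
noncomputable def mcontract {α : Type*} (L : Matroid α) (C : Set α) : Matroid α :=
  (L✶ ↾ (L.E \ C))✶

/-!
A base `B` of `M` is a basis of `S` in the free product, so `J ⊆ T` is independent in the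
contraction by `S` exactly when `J ∪ B` is independent in the free product. Since `B` has
zero rank-lack in `M`, this happens exactly when `J` has zero nullity in `N`, that is, when
`J` is independent in `N`.
-/

section FreeProduct

variable {α : Type*}

lemma mcontract_eq_contract (L : Matroid α) (C : Set α) : mcontract L C = L ／ C := rfl

section Rank

variable {M : Matroid α} {I X : Set α}

lemma Matroid.Indep.ncard_le_mrk_s4 (hX : X.Finite) (hI : M.Indep I) (hIX : I ⊆ X) :
    I.ncard ≤ mrk M X :=
  le_csSup ⟨X.ncard, by rintro _ ⟨J, ⟨-, hJX⟩, rfl⟩; exact ncard_le_ncard hJX hX⟩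
    ⟨I, ⟨hI, hIX⟩, rfl⟩

lemma Matroid.IsBasis.mrk_eq_ncard (hX : X.Finite) (hI : M.IsBasis I X) :
    mrk M X = I.ncard := by
  refine le_antisymm (csSup_le ⟨_, ∅, ⟨M.empty_indep, empty_subset X⟩, rfl⟩ ?_)
    (hI.indep.ncard_le_mrk_s4 hX hI.subset)
  rintro _ ⟨J, ⟨hJ, hJX⟩, rfl⟩
  obtain ⟨I', hI', hJI'⟩ := hJ.subset_isBasis_of_subset hJX hI.subset_ground
  calc J.ncard ≤ I'.ncard := ncard_le_ncard hJI' (hX.subset hI'.subset)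
    _ = I.ncard := by rw [ncard, ncard, hI'.encard_eq_encard hI]

lemma Matroid.indep_iff_ncard_le_mrk (hX : X.Finite) (hXE : X ⊆ M.E) :
    M.Indep X ↔ X.ncard ≤ mrk M X := by
  refine ⟨fun hXi ↦ hXi.ncard_le_mrk_s4 hX subset_rfl, fun h ↦ ?_⟩
  obtain ⟨I, hI⟩ := M.exists_isBasis X hXE
  rw [hI.mrk_eq_ncard hX] at h
  rw [← eq_of_subset_of_ncard_le hI.subset h hX]
  exact hI.indep

end Rank

/-- The independent sets of `L` are those of the free product `M □ N` on `S ∪ T`; the two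
sides of the inequality are the nullity `ν_N (A ∩ T)` and the rank-lack `λ_M (A ∩ S)`. -/
def IsFreeProduct (M N : Matroid α) (S T : Set α) (L : Matroid α) : Prop :=
  ∀ A : Set α, L.Indep A ↔ A ⊆ S ∪ T ∧ M.Indep (A ∩ S) ∧
    (A ∩ T).ncard - mrk N (A ∩ T) ≤ mrk M S - mrk M (A ∩ S)

namespace IsFreeProduct

variable {M N L : Matroid α} {S T : Set α}

lemma restrict_left_eq (hL : IsFreeProduct M N S T L) (hMS : M.E = S) (hST : Disjoint S T) :
    L ↾ S = M := by
  refine ext_indep (by rw [restrict_ground_eq, hMS]) fun A (hAS : A ⊆ S) ↦ ?_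
  have hA : A ∩ T = ∅ := (hST.mono_left hAS).inter_eq
  rw [restrict_indep_iff, hL A, inter_eq_left.2 hAS, hA]
  simp [hAS, subset_union_of_subset_left hAS]

lemma isBasis_of_isBase (hL : IsFreeProduct M N S T L) (hMS : M.E = S) (hST : Disjoint S T)
    (hLE : L.E = S ∪ T) {B : Set α} (hB : M.IsBase B) : L.IsBasis B S := by
  rw [← isBase_restrict_iff (hLE ▸ subset_union_left), hL.restrict_left_eq hMS hST]
  exact hB

lemma indep_union_isBase_iff (hL : IsFreeProduct M N S T L) (hS : S.Finite) (hT : T.Finite)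
    (hMS : M.E = S) (hNT : N.E = T) (hST : Disjoint S T) {B J : Set α} (hB : M.IsBase B)
    (hJT : J ⊆ T) : L.Indep (J ∪ B) ↔ N.Indep J := by
  have hBS : B ⊆ S := hMS ▸ hB.subset_ground
  have hJS : (J ∪ B) ∩ S = B := by
    rw [union_inter_distrib_right, (hST.symm.mono_left hJT).inter_eq, empty_union,
      inter_eq_left.2 hBS]
  have hJT' : (J ∪ B) ∩ T = J := by
    rw [union_inter_distrib_right, (hST.mono_left hBS).inter_eq, union_empty,
      inter_eq_left.2 hJT]
  have hrank : mrk M S = mrk M B := by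
    have hBasis : M.IsBasis B S := hMS ▸ hB.isBasis_ground
    rw [hBasis.mrk_eq_ncard hS,
      hB.indep.isBasis_self.mrk_eq_ncard (hS.subset hBS)]
  rw [hL (J ∪ B), hJS, hJT', hrank, Nat.sub_self, Nat.le_zero, Nat.sub_eq_zero_iff_le,
    ← N.indep_iff_ncard_le_mrk (hT.subset hJT) (hNT ▸ hJT)]
  simp [union_subset (subset_union_of_subset_right hJT S) (subset_union_of_subset_left hBS T),
    hB.indep]

end IsFreeProduct

end FreeProduct

/-- The contraction of the free product `L = M □ N` by `S` equals `N`. -/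
theorem stmt_4 {α : Type*} (M N : Matroid α) (S T : Set α)
    (hS : S.Finite) (hT : T.Finite) (hMS : M.E = S) (hNT : N.E = T)
    (hST : Disjoint S T)
    (L : Matroid α) (hLE : L.E = S ∪ T)
    (hLI : ∀ A : Set α, L.Indep A ↔ A ⊆ S ∪ T ∧ M.Indep (A ∩ S) ∧
      (A ∩ T).ncard - mrk N (A ∩ T) ≤ mrk M S - mrk M (A ∩ S)) :
    mcontract L S = N := by
  have hL : IsFreeProduct M N S T L := hLI
  have hground : L.E \ S = T := by rw [hLE, union_sdiff_left, hST.sdiff_eq_right]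
  obtain ⟨B, hB⟩ := M.exists_isBase
  rw [mcontract_eq_contract]
  refine ext_indep (by rw [contract_ground, hground, hNT]) fun J hJ ↦ ?_
  rw [contract_ground, hground] at hJ
  rw [(hL.isBasis_of_isBase hMS hST hLE hB).contract_indep_iff,
    hL.indep_union_isBase_iff hS hT hMS hNT hST hB hJ, and_iff_left (hST.mono_right hJ)]
end
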